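/- arXiv:1006.0361 — 3 statements merged into one kernel-verified Lean document; each statement's English description precedes it below -/
import Mathlib

section
/- Let z = (z₁,z₂,z₃,z₄) ∈ ℂ⁴ and let X₁(z), X₂(z), X₃(z) be the tangent vectors to the irreducible SU(2)-orbit through z. If ⟨X₁(z),X₂(z)⟩ = ⟨X₁(z),X₃(z)⟩ = ⟨X₂(z),X₃(z)⟩ = 0 (real orthogonality), then z₁·conj(z₂) − z₃·conj(z₄) = 0 and Im(z₁·conj(z₃) + z₂·conj(z₄)) = 0. -/
noncomputable section

open Matrix Complex

/-- `ℂ⁴` as functions `Fin 4 → ℂ`. -/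
abbrev C4 := Fin 4 → ℂ

/-- `√3` as a complex number. -/
def sqrt3 : ℂ := (Real.sqrt 3 : ℂ)

/-- First tangent vector to the orbit of the irreducible SU(2) action on `ℂ⁴` at `z`:
`X₁(z) = (√3 z₂, −√3 z₁ + 2z₃, −2z₂ + √3 z₄, −√3 z₃)`. -/
def X1 (z : C4) : C4 :=
  ![sqrt3 * z 1, -sqrt3 * z 0 + 2 * z 2, -2 * z 1 + sqrt3 * z 3, -sqrt3 * z 2]

/-- Second tangent vector:
`X₂(z) = (i√3 z₂, i√3 z₁ + 2i z₃, 2i z₂ + i√3 z₄, i√3 z₃)`. -/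
def X2 (z : C4) : C4 :=
  ![Complex.I * sqrt3 * z 1, Complex.I * sqrt3 * z 0 + 2 * Complex.I * z 2,
    2 * Complex.I * z 1 + Complex.I * sqrt3 * z 3, Complex.I * sqrt3 * z 2]

/-- Third tangent vector: `X₃(z) = (3i z₁, i z₂, −i z₃, −3i z₄)`. -/
def X3 (z : C4) : C4 :=
  ![3 * Complex.I * z 0, Complex.I * z 1, -Complex.I * z 2, -3 * Complex.I * z 3]

/-- The real inner product on `ℂ⁴`: `⟨u,v⟩ = Σⱼ Re (conj uⱼ * vⱼ)`. -/
def rinner (u v : C4) : ℝ := ∑ j, ((starRingEnd ℂ) (u j) * v j).re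

/-- The Kähler form on `ℂ⁴`: `ω₀(u,v) = Σⱼ Im (conj uⱼ * vⱼ)`. -/
def omega0 (u v : C4) : ℝ := ∑ j, ((starRingEnd ℂ) (u j) * v j).im

/-- The holomorphic volume form on `ℂ⁴`: determinant of the complex 4×4 matrix with
columns `v₁, v₂, v₃, v₄`. -/
def Omega0 (v₁ v₂ v₃ v₄ : C4) : ℂ :=
  Matrix.det (Matrix.of fun r c => ![v₁, v₂, v₃, v₄] c r)

/-- The Spin(7) 4-form on `ℂ⁴ ≅ ℝ⁸`:
`Φ₀ = ω₀(v₁,v₂)ω₀(v₃,v₄) − ω₀(v₁,v₃)ω₀(v₂,v₄) + ω₀(v₁,v₄)ω₀(v₂,v₃) + Re Ω₀`. -/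
def Phi0 (v₁ v₂ v₃ v₄ : C4) : ℝ :=
  omega0 v₁ v₂ * omega0 v₃ v₄ - omega0 v₁ v₃ * omega0 v₂ v₄ +
  omega0 v₁ v₄ * omega0 v₂ v₃ + (Omega0 v₁ v₂ v₃ v₄).re

/-- `ζ₁(z) = 3|z₄|² + |z₃|² − |z₂|² − 3|z₁|²`. -/
def zeta1 (z : C4) : ℝ :=
  3 * Complex.normSq (z 3) + Complex.normSq (z 2) -
  Complex.normSq (z 1) - 3 * Complex.normSq (z 0)

/-- `ζ₂(z) = 2√3 z₁ conj(z₂) + 4 z₂ conj(z₃) + 2√3 z₃ conj(z₄)`. -/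
def zeta2 (z : C4) : ℂ :=
  2 * sqrt3 * z 0 * (starRingEnd ℂ) (z 1) + 4 * z 1 * (starRingEnd ℂ) (z 2) +
  2 * sqrt3 * z 2 * (starRingEnd ℂ) (z 3)

/-- `ζ₃(z) = 36 z₁²z₄² − 12 z₂²z₃² + 16√3 z₁z₃³ + 16√3 z₂³z₄ − 72 z₁z₂z₃z₄`. -/
def zeta3 (z : C4) : ℂ :=
  36 * z 0 ^ 2 * z 3 ^ 2 - 12 * z 1 ^ 2 * z 2 ^ 2 + 16 * sqrt3 * z 0 * z 2 ^ 3 +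
  16 * sqrt3 * z 1 ^ 3 * z 3 - 72 * z 0 * z 1 * z 2 * z 3

/-- If the tangent vectors `X₁(z), X₂(z), X₃(z)` of the irreducible SU(2)-orbit through
`z` are pairwise orthogonal for the real inner product, then
`z₁ conj(z₂) − z₃ conj(z₄) = 0` and `Im(z₁ conj(z₃) + z₂ conj(z₄)) = 0`. -/
theorem orthogonality_conditions (z : C4)
    (h12 : rinner (X1 z) (X2 z) = 0)
    (h13 : rinner (X1 z) (X3 z) = 0)
    (h23 : rinner (X2 z) (X3 z) = 0) :
    z 0 * (starRingEnd ℂ) (z 1) - z 2 * (starRingEnd ℂ) (z 3) = 0 ∧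
    (z 0 * (starRingEnd ℂ) (z 2) + z 1 * (starRingEnd ℂ) (z 3)).im = 0 := by
  have hs : Real.sqrt 3 ≠ 0 := by positivity
  have hs3 : Real.sqrt 3 * Real.sqrt 3 = 3 := Real.mul_self_sqrt (by norm_num)
  simp only [rinner, X1, X2, X3, sqrt3, Fin.sum_univ_four, Matrix.cons_val_zero,
    Matrix.cons_val_one, Matrix.head_cons, Matrix.cons_val_two, Matrix.tail_cons,
    Matrix.cons_val_three, _root_.map_add, _root_.map_mul, _root_.map_neg,
    _root_.map_ofNat, Complex.conj_I, Complex.conj_ofReal, Complex.add_re,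
    Complex.mul_re, Complex.mul_im, Complex.neg_re, Complex.neg_im, Complex.I_re,
    Complex.I_im, Complex.ofReal_re, Complex.ofReal_im, Complex.add_im,
    Complex.conj_re, Complex.conj_im, Complex.re_ofNat, Complex.im_ofNat]
    at h12 h13 h23
  constructor
  · rw [Complex.ext_iff]
    constructor
    · have key : Real.sqrt 3 * (z 0 * (starRingEnd ℂ) (z 1) - z 2 * (starRingEnd ℂ) (z 3)).re = 0 := by
        simp only [Complex.sub_re, Complex.mul_re, Complex.conj_re, Complex.conj_im]
        linear_combination (1/4) * h23
      simpa [Complex.zero_re] using (mul_eq_zero.mp key).resolve_left hs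
    · have key : Real.sqrt 3 * (z 0 * (starRingEnd ℂ) (z 1) - z 2 * (starRingEnd ℂ) (z 3)).im = 0 := by
        simp only [Complex.sub_im, Complex.mul_im, Complex.conj_re, Complex.conj_im]
        linear_combination (-1/4) * h13
      simpa [Complex.zero_im] using (mul_eq_zero.mp key).resolve_left hs
  · have key : Real.sqrt 3 * (z 0 * (starRingEnd ℂ) (z 2) + z 1 * (starRingEnd ℂ) (z 3)).im = 0 := by
      simp only [Complex.add_im, Complex.mul_im, Complex.conj_re, Complex.conj_im]
      linear_combination (-1/4) * h12
    exact (mul_eq_zero.mp key).resolve_left hs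


end
end

section
/- Let z = (z₁,z₂,z₃,z₄) ∈ ℂ⁴ with |z₁|² + |z₂|² + |z₃|² + |z₄|² = 1, set X₀ = z and let X₁(z), X₂(z), X₃(z) be the tangent vectors to the irreducible SU(2)-orbit through z. Then ω₀(Xᵢ, Xⱼ) = 0 for all 0 ≤ i < j ≤ 3 if and only if ζ₁(z) = 0 and ζ₂(z) = 0. (This is the condition that the cone over the orbit is Lagrangian in ℂ⁴.) -/
noncomputable section

open Matrix Complex

lemma hsr : Real.sqrt 3 * Real.sqrt 3 = 3 :=
  Real.mul_self_sqrt (by norm_num)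

section omegas
variable (z : C4)

attribute [local simp] omega0 X1 X2 X3 zeta1 zeta2 sqrt3 Fin.sum_univ_four
  Complex.mul_im Complex.mul_re Complex.add_im Complex.add_re Complex.neg_im
  Complex.neg_re Complex.ofReal_re Complex.ofReal_im Complex.normSq_apply
  Complex.I_re Complex.I_im Complex.re_ofNat Complex.im_ofNat

lemma h01 : omega0 z (X1 z) = -(zeta2 z).im := by
  simp [Complex.conj_re, Complex.conj_im]; ring

lemma h02 : omega0 z (X2 z) = (zeta2 z).re := by
  simp [Complex.conj_re, Complex.conj_im]; ring

lemma h03 : omega0 z (X3 z) = -zeta1 z := by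
  simp [Complex.conj_re, Complex.conj_im]; ring

lemma h12 : omega0 (X1 z) (X2 z) = zeta1 z := by
  simp [Complex.conj_re, Complex.conj_im]
  linear_combination ((z 1).re^2 + (z 1).im^2 + (z 3).re^2 + (z 3).im^2
    - (z 0).re^2 - (z 0).im^2 - (z 2).re^2 - (z 2).im^2) * hsr

lemma h13 : omega0 (X1 z) (X3 z) = (zeta2 z).re := by
  simp [Complex.conj_re, Complex.conj_im]; ring

lemma h23 : omega0 (X2 z) (X3 z) = (zeta2 z).im := by
  simp [Complex.conj_re, Complex.conj_im]; ring

end omegas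

/-- For a unit vector `z`, the Kähler form `ω₀` vanishes on all pairs from
`(X₀, X₁, X₂, X₃) = (z, X₁(z), X₂(z), X₃(z))` if and only if `ζ₁(z) = 0` and
`ζ₂(z) = 0` (the condition that the cone over the orbit is Lagrangian in `ℂ⁴`). -/
theorem lagrangian_iff_zeta1_zeta2_vanish (z : C4)
    (hz : ∑ j, Complex.normSq (z j) = 1) :
    (∀ i j : Fin 4, i < j →
      omega0 (![z, X1 z, X2 z, X3 z] i) (![z, X1 z, X2 z, X3 z] j) = 0) ↔
    (zeta1 z = 0 ∧ zeta2 z = 0) := by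
  constructor
  · intro h
    have e1 := h 0 3 (by decide)
    have e2 := h 0 1 (by decide)
    have e3 := h 0 2 (by decide)
    simp only [Matrix.cons_val_zero, Matrix.cons_val_one, Matrix.head_cons,
      Matrix.cons_val_two, Matrix.tail_cons, Matrix.cons_val_three] at e1 e2 e3
    rw [h03] at e1
    rw [h01] at e2
    rw [h02] at e3
    refine ⟨by linarith, ?_⟩
    rw [Complex.ext_iff, Complex.zero_re, Complex.zero_im]
    exact ⟨e3, by linarith⟩
  · rintro ⟨hz1, hz2⟩
    intro i j hij
    fin_cases i <;> fin_cases j <;> simp_all [h01, h02, h03, h12, h13, h23]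

end
end

section
/- Let z = (z₁,z₂,z₃,z₄) ∈ ℂ⁴ with |z₁|² + |z₂|² + |z₃|² + |z₄|² = 1, and let X₁(z), X₂(z), X₃(z) be the tangent vectors to the irreducible SU(2)-orbit through z. Then Ω₀(z, X₁(z), X₂(z), X₃(z)) = 0 if and only if ζ₃(z) = 0. (This is the condition that the cone over the orbit is the zero locus of the holomorphic volume form, i.e. a complex cone condition.) -/
noncomputable section

open Matrix Complex

/-! `ℂ⁴` is the space of binary cubics `z₁x³ + √3 z₂x²y + √3 z₃xy² + z₄y³`, and `X₁, X₂, X₃` span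
the action of `𝔰𝔲(2)` on it, so `z ↦ Ω₀(z, X₁ z, X₂ z, X₃ z)` is an `SL(2, ℂ)`-invariant quartic.
Up to scale the only such quartic is the discriminant of the cubic, a multiple of `ζ₃`; expanding
the determinant fixes the factor as `-1`. -/

theorem Matrix.det_fin_four {R : Type*} [CommRing R] (A : Matrix (Fin 4) (Fin 4) R) :
    A.det = A 0 0 * (A 1 1 * A 2 2 * A 3 3 - A 1 1 * A 2 3 * A 3 2 - A 1 2 * A 2 1 * A 3 3
        + A 1 2 * A 2 3 * A 3 1 + A 1 3 * A 2 1 * A 3 2 - A 1 3 * A 2 2 * A 3 1)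
      - A 0 1 * (A 1 0 * A 2 2 * A 3 3 - A 1 0 * A 2 3 * A 3 2 - A 1 2 * A 2 0 * A 3 3
        + A 1 2 * A 2 3 * A 3 0 + A 1 3 * A 2 0 * A 3 2 - A 1 3 * A 2 2 * A 3 0)
      + A 0 2 * (A 1 0 * A 2 1 * A 3 3 - A 1 0 * A 2 3 * A 3 1 - A 1 1 * A 2 0 * A 3 3
        + A 1 1 * A 2 3 * A 3 0 + A 1 3 * A 2 0 * A 3 1 - A 1 3 * A 2 1 * A 3 0)
      - A 0 3 * (A 1 0 * A 2 1 * A 3 2 - A 1 0 * A 2 2 * A 3 1 - A 1 1 * A 2 0 * A 3 2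
        + A 1 1 * A 2 2 * A 3 0 + A 1 2 * A 2 0 * A 3 1 - A 1 2 * A 2 1 * A 3 0) := by
  have h1 : (1 : Fin 4).succAbove 2 = 3 := rfl
  have h2 : (2 : Fin 4).succAbove 2 = 3 := rfl
  have h3 : (3 : Fin 4).succAbove 2 = 2 := rfl
  simp [det_succ_row_zero, Fin.sum_univ_succ, h1, h2, h3]
  ring

theorem sqrt3_sq : sqrt3 ^ 2 = 3 := by
  rw [sqrt3, ← Complex.ofReal_pow, Real.sq_sqrt (by norm_num)]
  norm_num

theorem Omega0_orbit_eq_neg_zeta3 (z : C4) : Omega0 z (X1 z) (X2 z) (X3 z) = -zeta3 z := by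
  rw [Omega0, Matrix.det_fin_four]
  simp only [X1, X2, X3, zeta3, of_apply, cons_val', cons_val_fin_one, cons_val_zero,
    cons_val_one, cons_val]
  ring_nf
  rw [Complex.I_sq, sqrt3_sq]
  ring

theorem Omega0_orbit_eq_zero_iff_zeta3_general (z : C4) :
    Omega0 z (X1 z) (X2 z) (X3 z) = 0 ↔ zeta3 z = 0 := by
  rw [Omega0_orbit_eq_neg_zeta3, neg_eq_zero]

/-- For a unit vector `z`, the holomorphic volume form vanishes on
`(z, X₁(z), X₂(z), X₃(z))` if and only if `ζ₃(z) = 0` (the condition that the cone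
over the orbit is a complex cone condition). -/
theorem Omega0_orbit_eq_zero_iff_zeta3 (z : C4)
    (hz : ∑ j, Complex.normSq (z j) = 1) :
    Omega0 z (X1 z) (X2 z) (X3 z) = 0 ↔ zeta3 z = 0 :=
  Omega0_orbit_eq_zero_iff_zeta3_general z

end
end
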